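/- arXiv:2304.03862 — 3 statements merged into one kernel-verified Lean document; each statement's English description precedes it below -/
import Mathlib

section
/- Let k > 0, θ > 0, ρ > 0, λ_I ≥ 0, λ_O > 0 and γ̄ > 0 be reals with λ_O > λ_I·γ̄, and let H be a real random variable whose law has density f(x) = x^(k−1) · exp(−x/θ) / (Γ(k) θ^k) on (0, ∞). Then the outage probability of the outdoor user satisfies P( ρ·λ_O·H²/(ρ·λ_I·H² + 1) < γ̄ ) = γ(k, √(γ̄/(ρ·(λ_O − λ_I·γ̄)))/θ) / Γ(k). -/
open Real MeasureTheory intervalIntegral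

/-- The lower incomplete gamma function `γ(k, y) = ∫₀^y s^(k−1) e^(−s) ds`. -/
noncomputable def lowerIncGamma (k y : ℝ) : ℝ :=
  ∫ s in (0 : ℝ)..y, s ^ (k - 1) * Real.exp (-s)

lemma aux_integral (k θ c : ℝ) (hk : 0 < k) (hθ : 0 < θ) (hc : 0 ≤ c) :
    ∫ x in (0:ℝ)..c, x ^ (k - 1) * Real.exp (-x / θ) =
      θ ^ k * lowerIncGamma k (c / θ) := by
  have h1 : ∀ x : ℝ, x ^ (k - 1) * Real.exp (-x / θ) =
      (fun s => (θ * s) ^ (k - 1) * Real.exp (-s)) (x / θ) := by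
    intro x
    have hx : θ * (x / θ) = x := by field_simp
    simp only [hx, neg_div]
  have h2 : (∫ x in (0:ℝ)..c, x ^ (k - 1) * Real.exp (-x / θ))
      = ∫ x in (0:ℝ)..c, (fun s => (θ * s) ^ (k - 1) * Real.exp (-s)) (x / θ) := by
    apply intervalIntegral.integral_congr
    intro x _
    exact h1 x
  rw [h2, intervalIntegral.integral_comp_div (f := fun s => (θ * s) ^ (k - 1) * Real.exp (-s)) hθ.ne', zero_div]
  have h3 : (∫ s in (0:ℝ)..(c/θ), (θ * s) ^ (k - 1) * Real.exp (-s))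
      = θ ^ (k - 1) * ∫ s in (0:ℝ)..(c/θ), s ^ (k - 1) * Real.exp (-s) := by
    rw [← intervalIntegral.integral_const_mul]
    apply intervalIntegral.integral_congr
    intro s hs
    have hs0 : 0 ≤ s := by
      rcases Set.mem_uIcc.mp hs with h | h
      · exact h.1
      · exact le_trans (div_nonneg hc hθ.le) h.1
    simp only
    rw [Real.mul_rpow hθ.le hs0]
    ring
  rw [h3, lowerIncGamma, smul_eq_mul]
  rw [Real.rpow_sub hθ, Real.rpow_one]
  field_simp

/-- If the channel magnitude `H` is Gamma-distributed with shape `k` and scale `θ`, then the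
outdoor-user outage probability equals `γ(k, √(γ̄/(ρ·(λ_O − λ_I·γ̄)))/θ) / Γ(k)`. -/
theorem outdoor_outage_probability (k θ ρ lamI lamO γbar : ℝ)
    (hk : 0 < k) (hθ : 0 < θ) (hρ : 0 < ρ) (hI : 0 ≤ lamI) (hO : 0 < lamO)
    (hγ : 0 < γbar) (hcond : lamI * γbar < lamO)
    {Ω : Type*} [MeasurableSpace Ω] (P : Measure Ω) [IsProbabilityMeasure P]
    (H : Ω → ℝ) (hH : Measurable H)
    (hlaw : P.map H = volume.withDensity (fun x =>
      ENNReal.ofReal (if 0 < x then x ^ (k - 1) * Real.exp (-x / θ) / (Real.Gamma k * θ ^ k)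
        else 0))) :
    P {ω | ρ * lamO * (H ω) ^ 2 / (ρ * lamI * (H ω) ^ 2 + 1) < γbar} =
      ENNReal.ofReal
        (lowerIncGamma k (Real.sqrt (γbar / (ρ * (lamO - lamI * γbar))) / θ) /
          Real.Gamma k) := by
  set c := Real.sqrt (γbar / (ρ * (lamO - lamI * γbar))) with hcdef
  have hden : 0 < ρ * (lamO - lamI * γbar) := mul_pos hρ (by linarith)
  have harg : 0 < γbar / (ρ * (lamO - lamI * γbar)) := div_pos hγ hden
  have hc0 : 0 < c := Real.sqrt_pos.mpr harg
  have hc2 : c ^ 2 = γbar / (ρ * (lamO - lamI * γbar)) := Real.sq_sqrt harg.le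
  have hΓ : 0 < Real.Gamma k := Real.Gamma_pos_of_pos hk
  have hθk : 0 < θ ^ k := Real.rpow_pos_of_pos hθ k
  -- the event is the preimage of Ioo (-c) c
  have hset : {ω | ρ * lamO * (H ω) ^ 2 / (ρ * lamI * (H ω) ^ 2 + 1) < γbar}
      = H ⁻¹' Set.Ioo (-c) c := by
    ext ω
    simp only [Set.mem_setOf_eq, Set.mem_preimage, Set.mem_Ioo]
    set x := H ω
    have hd : 0 < ρ * lamI * x ^ 2 + 1 := by positivity
    rw [div_lt_iff₀ hd]
    constructor
    · intro h
      have hx2 : x ^ 2 < c ^ 2 := by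
        rw [hc2, lt_div_iff₀ hden]; nlinarith
      constructor <;> nlinarith
    · rintro ⟨h1, h2⟩
      have hx2 : x ^ 2 < c ^ 2 := by nlinarith
      rw [hc2, lt_div_iff₀ hden] at hx2
      nlinarith
  -- integrability of the density on (0, c)
  have hcont : ContinuousOn (fun x : ℝ => Real.exp (-x / θ)) (Set.uIcc 0 c) :=
    (Real.continuous_exp.comp (by fun_prop)).continuousOn
  have hii : IntervalIntegrable (fun x : ℝ => x ^ (k - 1) * Real.exp (-x / θ))
      volume 0 c :=
    (intervalIntegral.intervalIntegrable_rpow' (by linarith)).mul_continuousOn hcont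
  have hint : IntegrableOn (fun x : ℝ =>
      x ^ (k - 1) * Real.exp (-x / θ) / (Real.Gamma k * θ ^ k)) (Set.Ioo 0 c) := by
    have := ((intervalIntegrable_iff_integrableOn_Ioc_of_le hc0.le).mp hii).mono_set
      Set.Ioo_subset_Ioc_self
    exact this.div_const _
  have hnn : 0 ≤ᵐ[volume.restrict (Set.Ioo 0 c)] (fun x : ℝ =>
      x ^ (k - 1) * Real.exp (-x / θ) / (Real.Gamma k * θ ^ k)) := by
    filter_upwards [ae_restrict_mem measurableSet_Ioo] with x hx
    have : 0 ≤ x := hx.1.le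
    positivity
  rw [hset, ← Measure.map_apply hH measurableSet_Ioo, hlaw,
    withDensity_apply _ measurableSet_Ioo]
  have hind : (fun x : ℝ => ENNReal.ofReal
      (if 0 < x then x ^ (k - 1) * Real.exp (-x / θ) / (Real.Gamma k * θ ^ k) else 0))
      = Set.indicator (Set.Ioi 0) (fun x => ENNReal.ofReal
        (x ^ (k - 1) * Real.exp (-x / θ) / (Real.Gamma k * θ ^ k))) := by
    ext x
    by_cases h : 0 < x <;> simp [Set.indicator, h]
  rw [hind, lintegral_indicator measurableSet_Ioi,
    Measure.restrict_restrict measurableSet_Ioi]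
  have hIoo : Set.Ioi (0:ℝ) ∩ Set.Ioo (-c) c = Set.Ioo 0 c := by
    ext x
    simp only [Set.mem_inter_iff, Set.mem_Ioi, Set.mem_Ioo]
    constructor
    · rintro ⟨h1, _, h3⟩; exact ⟨h1, h3⟩
    · rintro ⟨h1, h2⟩; exact ⟨h1, by linarith, h2⟩
  rw [hIoo, ← ofReal_integral_eq_lintegral_ofReal hint hnn]
  congr 1
  have h1 : (∫ x in Set.Ioo (0:ℝ) c,
      x ^ (k - 1) * Real.exp (-x / θ) / (Real.Gamma k * θ ^ k))
      = (∫ x in (0:ℝ)..c, x ^ (k - 1) * Real.exp (-x / θ)) / (Real.Gamma k * θ ^ k) := by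
    rw [intervalIntegral.integral_of_le hc0.le, ← MeasureTheory.integral_Ioc_eq_integral_Ioo,
      MeasureTheory.integral_div]
  rw [h1, aux_integral k θ c hk hθ hc0.le]
  field_simp
end

section
/- Let k > 0, θ > 0, ρ > 0, λ_I > 0, λ_O > 0, γ̄_O > 0 and γ̄_I > 0 be reals with λ_O > λ_I·γ̄_O, and let H be a real random variable whose law has density f(x) = x^(k−1) · exp(−x/θ) / (Γ(k) θ^k) on (0, ∞). Then the indoor-user outage probability satisfies 1 − P( ρ·λ_O·H²/(ρ·λ_I·H² + 1) > γ̄_O and ρ·λ_I·H² > γ̄_I ) = γ( k, max{ √(γ̄_O/(ρ·(λ_O − λ_I·γ̄_O))), √(γ̄_I/(λ_I·ρ)) } / θ ) / Γ(k). -/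
open Real MeasureTheory intervalIntegral

/-!
Proof idea: both SIC decoding conditions are monotone in the channel gain `H²`, so the success
event is `{|H| > c}` for the larger of the two square-root thresholds `c`.  The law of `H` is the
gamma distribution with rate `θ⁻¹`, which puts no mass on `(-∞, 0)`, so the outage probability is
its CDF at `c`; the substitution `s = x / θ` turns that integral into `γ(k, c / θ) / Γ(k)`.
-/

open ProbabilityTheory Set

theorem integral_rpow_mul_exp_neg_mul_eq_lowerIncGamma {a r c : ℝ} (hr : 0 < r) (hc : 0 ≤ c) :
    ∫ x in (0 : ℝ)..c, x ^ (a - 1) * exp (-(r * x)) = lowerIncGamma a (r * c) / r ^ a := by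
  have hscale : ∀ x ∈ uIcc (0 : ℝ) c,
      x ^ (a - 1) * exp (-(r * x)) = (r ^ (a - 1))⁻¹ * ((r * x) ^ (a - 1) * exp (-(r * x))) := by
    intro x hx
    rw [uIcc_of_le hc] at hx
    rw [mul_rpow hr.le hx.1]
    field_simp
  rw [integral_congr hscale, intervalIntegral.integral_const_mul,
    integral_comp_mul_left (fun s => s ^ (a - 1) * exp (-s)) hr.ne', mul_zero, ← lowerIncGamma,
    smul_eq_mul, rpow_sub_one hr.ne']
  field_simp

theorem cdf_gammaMeasure_eq_lowerIncGamma {a r c : ℝ} (ha : 0 < a) (hr : 0 < r) (hc : 0 ≤ c) :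
    cdf (gammaMeasure a r) c = lowerIncGamma a (r * c) / Gamma a := by
  have hsupport : ∫ x in Iic c, gammaPDFReal a r x = ∫ x in Icc 0 c, gammaPDFReal a r x :=
    setIntegral_eq_of_subset_of_forall_sdiff_eq_zero measurableSet_Iic Icc_subset_Iic_self
      fun x hx => if_neg fun hx0 => hx.2 ⟨hx0, hx.1⟩
  have hformula : ∫ x in (0 : ℝ)..c, gammaPDFReal a r x =
      ∫ x in (0 : ℝ)..c, r ^ a / Gamma a * (x ^ (a - 1) * exp (-(r * x))) := by
    refine integral_congr fun x hx => ?_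
    rw [uIcc_of_le hc] at hx
    rw [gammaPDFReal, if_pos hx.1, mul_assoc]
  rw [cdf_gammaMeasure_eq_integral ha hr, hsupport, integral_Icc_eq_integral_Ioc,
    ← integral_of_le hc, hformula, intervalIntegral.integral_const_mul,
    integral_rpow_mul_exp_neg_mul_eq_lowerIncGamma hr hc]
  field_simp

theorem gammaMeasure_Iio_of_nonpos {a r x : ℝ} (hx : x ≤ 0) : gammaMeasure a r (Iio x) = 0 := by
  rw [gammaMeasure, withDensity_apply _ measurableSet_Iio, lintegral_gammaPDF_of_nonpos hx]

theorem gammaMeasure_Icc_neg_self {a r c : ℝ} (hc : 0 ≤ c) :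
    gammaMeasure a r (Icc (-c) c) = gammaMeasure a r (Iic c) := by
  rw [show Icc (-c) c = Iic c \ Iio (-c) by ext; simp [and_comm],
    measure_sdiff_null (gammaMeasure_Iio_of_nonpos (neg_nonpos.mpr hc))]

/-- Scale `θ` is rate `θ⁻¹`; the two densities differ only at `0`. -/
theorem withDensity_gamma_scale_eq_gammaMeasure {k θ : ℝ} (hθ : 0 < θ) :
    volume.withDensity (fun x => ENNReal.ofReal
      (if 0 < x then x ^ (k - 1) * exp (-x / θ) / (Gamma k * θ ^ k) else 0)) =
      gammaMeasure k θ⁻¹ := by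
  refine withDensity_congr_ae ?_
  filter_upwards [volume.ae_ne 0] with x hx
  rw [gammaPDF_eq]
  rcases hx.lt_or_gt with hneg | hpos
  · rw [if_neg hneg.not_gt, if_neg hneg.not_ge]
  · rw [if_pos hpos, if_pos hpos.le, inv_rpow hθ.le]
    congr 1
    field_simp

theorem sinr_gt_iff {ρ lamI lamO γ t : ℝ} (hρ : 0 < ρ) (hI : 0 < lamI) (hcond : lamI * γ < lamO)
    (ht : 0 ≤ t) :
    ρ * lamO * t / (ρ * lamI * t + 1) > γ ↔ γ / (ρ * (lamO - lamI * γ)) < t := by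
  have hmargin : 0 < ρ * (lamO - lamI * γ) := mul_pos hρ (sub_pos.mpr hcond)
  rw [gt_iff_lt, lt_div_iff₀ (by positivity), div_lt_iff₀ hmargin]
  constructor <;> intro <;> linarith

theorem sqrt_lt_abs_iff {a x : ℝ} (ha : 0 ≤ a) : √a < |x| ↔ a < x ^ 2 := by
  rw [sqrt_lt ha (abs_nonneg x), sq_abs]

theorem sic_success_iff {ρ lamI lamO γO γI : ℝ} (hρ : 0 < ρ) (hI : 0 < lamI) (hγO : 0 ≤ γO)
    (hγI : 0 ≤ γI) (hcond : lamI * γO < lamO) (x : ℝ) :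
    (ρ * lamO * x ^ 2 / (ρ * lamI * x ^ 2 + 1) > γO ∧ ρ * lamI * x ^ 2 > γI) ↔
      max √(γO / (ρ * (lamO - lamI * γO))) √(γI / (lamI * ρ)) < |x| := by
  rw [max_lt_iff, sqrt_lt_abs_iff (div_nonneg hγO (mul_pos hρ (sub_pos.mpr hcond)).le),
    sqrt_lt_abs_iff (by positivity)]
  refine and_congr (sinr_gt_iff hρ hI hcond (sq_nonneg x)) ?_
  rw [gt_iff_lt, div_lt_iff₀ (by positivity), show x ^ 2 * (lamI * ρ) = ρ * lamI * x ^ 2 by ring]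

theorem indoor_outage_probability_general (k θ ρ lamI lamO γbarO γbarI : ℝ)
    (hk : 0 < k) (hθ : 0 < θ) (hρ : 0 < ρ) (hI : 0 < lamI)
    (hγO : 0 < γbarO) (hγI : 0 < γbarI) (hcond : lamI * γbarO < lamO)
    {Ω : Type*} [MeasurableSpace Ω] (P : Measure Ω) [IsProbabilityMeasure P]
    (H : Ω → ℝ) (hH : Measurable H)
    (hlaw : P.map H = volume.withDensity (fun x =>
      ENNReal.ofReal (if 0 < x then x ^ (k - 1) * Real.exp (-x / θ) / (Real.Gamma k * θ ^ k)
        else 0))) :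
    1 - P {ω | ρ * lamO * (H ω) ^ 2 / (ρ * lamI * (H ω) ^ 2 + 1) > γbarO ∧
          ρ * lamI * (H ω) ^ 2 > γbarI} =
      ENNReal.ofReal
        (lowerIncGamma k
            (max (Real.sqrt (γbarO / (ρ * (lamO - lamI * γbarO))))
              (Real.sqrt (γbarI / (lamI * ρ))) / θ) / Real.Gamma k) := by
  set c := max √(γbarO / (ρ * (lamO - lamI * γbarO))) √(γbarI / (lamI * ρ))
  have hc : 0 ≤ c := (sqrt_nonneg _).trans (le_max_left _ _)
  have hS : MeasurableSet {x : ℝ | c < |x|} := measurableSet_lt measurable_const measurable_abs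
  have hsuccess : {ω | ρ * lamO * (H ω) ^ 2 / (ρ * lamI * (H ω) ^ 2 + 1) > γbarO ∧
      ρ * lamI * (H ω) ^ 2 > γbarI} = H ⁻¹' {x | c < |x|} :=
    ext fun ω => sic_success_iff hρ hI hγO.le hγI.le hcond (H ω)
  have houtage : {x : ℝ | c < |x|}ᶜ = Icc (-c) c := by
    ext x
    simp [abs_le]
  have := isProbabilityMeasure_gammaMeasure hk (inv_pos.mpr hθ)
  rw [hsuccess, ← prob_compl_eq_one_sub (hH hS), ← preimage_compl, ← Measure.map_apply hH hS.compl,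
    hlaw, withDensity_gamma_scale_eq_gammaMeasure hθ, houtage, gammaMeasure_Icc_neg_self hc,
    ← ofReal_cdf, cdf_gammaMeasure_eq_lowerIncGamma hk (inv_pos.mpr hθ) hc, inv_mul_eq_div]

/-- If the channel magnitude `H` is Gamma-distributed with shape `k` and scale `θ`, then the
indoor-user outage probability (failing to decode the outdoor message or its own message)
equals `γ(k, max{√(γ̄_O/(ρ·(λ_O − λ_I·γ̄_O))), √(γ̄_I/(λ_I·ρ))}/θ) / Γ(k)`. -/
theorem indoor_outage_probability (k θ ρ lamI lamO γbarO γbarI : ℝ)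
    (hk : 0 < k) (hθ : 0 < θ) (hρ : 0 < ρ) (hI : 0 < lamI) (hO : 0 < lamO)
    (hγO : 0 < γbarO) (hγI : 0 < γbarI) (hcond : lamI * γbarO < lamO)
    {Ω : Type*} [MeasurableSpace Ω] (P : Measure Ω) [IsProbabilityMeasure P]
    (H : Ω → ℝ) (hH : Measurable H)
    (hlaw : P.map H = volume.withDensity (fun x =>
      ENNReal.ofReal (if 0 < x then x ^ (k - 1) * Real.exp (-x / θ) / (Real.Gamma k * θ ^ k)
        else 0))) :
    1 - P {ω | ρ * lamO * (H ω) ^ 2 / (ρ * lamI * (H ω) ^ 2 + 1) > γbarO ∧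
          ρ * lamI * (H ω) ^ 2 > γbarI} =
      ENNReal.ofReal
        (lowerIncGamma k
            (max (Real.sqrt (γbarO / (ρ * (lamO - lamI * γbarO))))
              (Real.sqrt (γbarI / (lamI * ρ))) / θ) / Real.Gamma k) :=
  indoor_outage_probability_general k θ ρ lamI lamO γbarO γbarI hk hθ hρ hI hγO hγI hcond P H hH
    hlaw
end

section
/- For all real a ≥ 0 and b ≥ 0, the function x ↦ log(1 + a·x/(b·x + 1)) is concave on the interval [0, ∞). -/
open Real

/-- For `a ≥ 0` and `b ≥ 0`, the map `x ↦ log(1 + a·x/(b·x + 1))` is concave on `[0, ∞)`. -/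
theorem log_sinr_concaveOn (a b : ℝ) (ha : 0 ≤ a) (hb : 0 ≤ b) :
    ConcaveOn ℝ (Set.Ici (0 : ℝ)) (fun x => Real.log (1 + a * x / (b * x + 1))) := by
  refine ⟨convex_Ici 0, ?_⟩
  intro x hx y hy p q hp hq hpq
  simp only [Set.mem_Ici] at hx hy
  have hD1 : 0 < b * x + 1 := by positivity
  have hD2 : 0 < b * y + 1 := by positivity
  have hD : 0 < b * (p * x + q * y) + 1 := by positivity
  set f : ℝ → ℝ := fun x => 1 + a * x / (b * x + 1) with hf
  have hfx : 0 < f x := by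
    have : 0 ≤ a * x / (b * x + 1) := by positivity
    simp only [hf]; linarith
  have hfy : 0 < f y := by
    have : 0 ≤ a * y / (b * y + 1) := by positivity
    simp only [hf]; linarith
  have hconc : p * f x + q * f y ≤ f (p * x + q * y) := by
    rw [← sub_nonneg]
    have key : f (p * x + q * y) - (p * f x + q * f y)
        = a * b * p * q * (x - y) ^ 2 /
          ((b * (p * x + q * y) + 1) * ((b * x + 1) * (b * y + 1))) := by
      have hq' : q = 1 - p := by linarith
      subst hq'
      simp only [hf]
      field_simp
      ring
    rw [key]
    positivity
  have hmid : 0 < p * f x + q * f y := by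
    rcases eq_or_lt_of_le hp with hp0 | hp0
    · have hq1 : q = 1 := by linarith
      simp [← hp0, hq1, hfy]
    · nlinarith [mul_nonneg hq hfy.le]
  have hlog : p * Real.log (f x) + q * Real.log (f y)
      ≤ Real.log (p * f x + q * f y) := by
    have := strictConcaveOn_log_Ioi.concaveOn.2 (Set.mem_Ioi.mpr hfx)
      (Set.mem_Ioi.mpr hfy) hp hq hpq
    simpa using this
  calc p • Real.log (f x) + q • Real.log (f y)
      ≤ Real.log (p * f x + q * f y) := by simpa using hlog
    _ ≤ Real.log (f (p * x + q * y)) := Real.log_le_log hmid hconc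
end
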